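/- (Weak duality, part (i).) Let G = (V,E) be a finite, connected, undirected graph with no self-loops, V = {1,…,N}, all edge weights equal to 1, let ρ^a, ρ^b ∈ P(G), Σ ∈ ℝ^N, and let w : [0,1] → ℝ be continuous piecewise linear. Suppose (ρ, m) ∈ C_F(ρ^a, ρ^b) and S : [0,1] → ℝ^N is absolutely continuous with square-integrable derivative such that for a.e. t ∈ [0,1]: ∑_i Ṡ_i(t) ρ_i(t) + (1/4) ∑_{(i,j)∈E} (S_i(t) − S_j(t))² θ_ij(ρ(t)) + (1/2) ∑_{(i,j)∈E} (Σ_i − Σ_j)(S_i(t) − S_j(t)) θ_ij(ρ(t)) ẇ(t) ≤ 0. Then ⟨S(1), ρ^b⟩ − ⟨S(0), ρ^a⟩ ≤ A(ρ, m). -/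

import Mathlib

open scoped BigOperators ENNReal
open MeasureTheory

noncomputable section

/-- Density-dependent edge weight `θ_ij(ρ) = (ρ_i + ρ_j)/2`. -/
def thetaA {N : ℕ} (ρ : Fin N → ℝ) (i j : Fin N) : ℝ := (ρ i + ρ j) / 2

/-- The cost function `L : ℝ × ℝ → [0,∞]`, `L(x,y) = y²/x` for `x > 0`,
`L(0,0) = 0`, and `L(x,y) = ∞` otherwise. -/
def Lcost (x y : ℝ) : ℝ≥0∞ :=
  if 0 < x then ENNReal.ofReal (y ^ 2 / x)
  else if x = 0 ∧ y = 0 then 0 else ⊤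

/-- Membership in the probability simplex `P(G)`. -/
def ProbVec {N : ℕ} (ρ : Fin N → ℝ) : Prop := (∀ i, 0 ≤ ρ i) ∧ ∑ i, ρ i = 1

/-- A vector field on the graph: a skew-symmetric matrix supported on edges. -/
def VecField {N : ℕ} (E : Fin N → Fin N → Prop) (m : Fin N → Fin N → ℝ) : Prop :=
  (∀ i j, m i j = - m j i) ∧ (∀ i j, ¬ E i j → m i j = 0)

/-- `w` is continuous and piecewise linear on `[0,1]` with a.e. derivative `wd`:
there is a partition `0 = t₀ < t₁ < ⋯ = 1` on whose pieces `w` is affine with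
slope `c k`, and `wd` equals `c k` on `[t_k, t_{k+1})`. -/
def IsPWL (w wd : ℝ → ℝ) : Prop :=
  ∃ (K : ℕ) (t : Fin (K + 2) → ℝ) (c : Fin (K + 1) → ℝ),
    StrictMono t ∧ t 0 = 0 ∧ t (Fin.last (K + 1)) = 1 ∧
    (∀ k : Fin (K + 1), ∀ s ∈ Set.Icc (t k.castSucc) (t k.succ),
      w s = w (t k.castSucc) + c k * (s - t k.castSucc)) ∧
    (∀ k : Fin (K + 1), ∀ s ∈ Set.Ico (t k.castSucc) (t k.succ), wd s = c k)

/-- The action `A(ρ,m) = ∫₀¹ (1/4) ∑_{(i,j)∈E} L(θ_ij(ρ(t)), m_ij(t)) dt`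
(sum over ordered pairs), valued in `[0,∞]`. -/
def action {N : ℕ} (E : Fin N → Fin N → Prop) [DecidableRel E]
    (ρ : ℝ → Fin N → ℝ) (m : ℝ → Fin N → Fin N → ℝ) : ℝ≥0∞ :=
  ∫⁻ t in Set.Icc (0 : ℝ) 1,
    (1 / 4) * ∑ i, ∑ j, (if E i j then Lcost (thetaA (ρ t) i j) (m t i j) else 0)

/-- The feasible set `C_F(ρ^a,ρ^b)` of the Wong–Zakai perturbed optimal control
problem: `ρ` is an absolutely continuous curve in `P(G)` joining `ρ^a` to `ρ^b`,
`m` is an `L²` field of skew-symmetric matrices supported on edges, and for a.e. `t`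
and all `i`: `ρ̇_i + ∑_{j∈N(i)} m_ij + ∑_{j∈N(i)} (Σ_j − Σ_i) θ_ij(ρ) ẇ = 0`
(stated in integrated form). -/
def Feasible {N : ℕ} (E : Fin N → Fin N → Prop) [DecidableRel E]
    (Sg : Fin N → ℝ) (wd : ℝ → ℝ) (ρa ρb : Fin N → ℝ)
    (ρ : ℝ → Fin N → ℝ) (m : ℝ → Fin N → Fin N → ℝ) : Prop :=
  ContinuousOn ρ (Set.Icc 0 1) ∧
  (∀ t ∈ Set.Icc (0 : ℝ) 1, ProbVec (ρ t)) ∧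
  ρ 0 = ρa ∧ ρ 1 = ρb ∧
  (∀ t, VecField E (m t)) ∧
  (∀ i j, MemLp (fun t => m t i j) 2 (volume.restrict (Set.Icc (0 : ℝ) 1))) ∧
  (∀ i, IntervalIntegrable
    (fun s => ∑ j, (if E i j then m s i j + (Sg j - Sg i) * thetaA (ρ s) i j * wd s else 0))
    volume 0 1) ∧
  (∀ i, ∀ t ∈ Set.Icc (0 : ℝ) 1,
    ρ t i = ρa i - ∫ s in (0 : ℝ)..t,
      ∑ j, (if E i j then m s i j + (Sg j - Sg i) * thetaA (ρ s) i j * wd s else 0))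

/-- `S : [0,1] → ℝ^N` is absolutely continuous with square-integrable derivative
`Sd` (stated in integrated form). -/
def AbsCtsL2 {N : ℕ} (S Sd : ℝ → Fin N → ℝ) : Prop :=
  (∀ i, MemLp (fun t => Sd t i) 2 (volume.restrict (Set.Icc (0 : ℝ) 1))) ∧
  (∀ i, IntervalIntegrable (fun t => Sd t i) volume 0 1) ∧
  (∀ i, ∀ t ∈ Set.Icc (0 : ℝ) 1, S t i = S 0 i + ∫ s in (0 : ℝ)..t, Sd s i)

/-- The Hamilton–Jacobi expression
`∑_i Ṡ_i μ_i + (1/4) ∑_{(i,j)∈E} (S_i − S_j)² θ_ij(μ)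
  + (1/2) ∑_{(i,j)∈E} (Σ_i − Σ_j)(S_i − S_j) θ_ij(μ) ẇ(t)`. -/
def hjbExpr {N : ℕ} (E : Fin N → Fin N → Prop) [DecidableRel E]
    (Sg : Fin N → ℝ) (wd : ℝ → ℝ) (S Sd : ℝ → Fin N → ℝ)
    (μ : Fin N → ℝ) (t : ℝ) : ℝ :=
  (∑ i, Sd t i * μ i)
    + (1 / 4) * ∑ i, ∑ j, (if E i j then (S t i - S t j) ^ 2 * thetaA μ i j else 0)
    + (1 / 2) *
        (∑ i, ∑ j, (if E i j then (Sg i - Sg j) * (S t i - S t j) * thetaA μ i j else 0))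
        * wd t

/-!
Write the continuity equation as `ρ̇_i = -outflow_i`. Integration by parts for absolutely
continuous functions gives `⟨S(1), ρ^b⟩ - ⟨S(0), ρ^a⟩ = ∫₀¹ (⟨Ṡ, ρ⟩ - ⟨S, outflow⟩) dt`.
Summing by parts over the symmetric edge set, the integrand equals the Hamilton–Jacobi
expression plus `∑_E (-¼ (S_i - S_j)² θ_ij - ½ (S_i - S_j) m_ij)`; the former is `≤ 0`, and each
edge term is at most `¼ L(θ_ij, m_ij)` by completing the square (Fenchel–Young for `L`).
-/

open Set intervalIntegral

theorem absolutelyContinuousOnInterval_const_add_integral {f : ℝ → ℝ} {a b : ℝ} (c : ℝ)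
    (hf : IntervalIntegrable f volume a b) :
    AbsolutelyContinuousOnInterval (fun x => c + ∫ t in a..x, f t) a b :=
  (LipschitzWith.const c).lipschitzOnWith.absolutelyContinuousOnInterval.add
    (hf.absolutelyContinuousOnInterval_intervalIntegral (by simp))

theorem continuousOn_of_eq_const_add_integral {f F : ℝ → ℝ} {a b : ℝ}
    (hf : IntervalIntegrable f volume a b)
    (hF : ∀ x ∈ uIcc a b, F x = F a + ∫ t in a..x, f t) :
    ContinuousOn F (uIcc a b) :=
  (absolutelyContinuousOnInterval_const_add_integral (F a) hf).continuousOn.congr hF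

theorem integral_mul_add_mul_eq_of_eq_const_add_integral {f g F G : ℝ → ℝ} {a b : ℝ}
    (hf : IntervalIntegrable f volume a b) (hg : IntervalIntegrable g volume a b)
    (hF : ∀ x ∈ uIcc a b, F x = F a + ∫ t in a..x, f t)
    (hG : ∀ x ∈ uIcc a b, G x = G a + ∫ t in a..x, g t) :
    ∫ x in a..b, (f x * G x + F x * g x) = F b * G b - F a * G a := by
  have hparts :=
    (absolutelyContinuousOnInterval_const_add_integral (F a) hf).integral_deriv_mul_eq_sub
      (absolutelyContinuousOnInterval_const_add_integral (G a) hg)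
  rw [← hF b right_mem_uIcc, ← hG b right_mem_uIcc] at hparts
  simp only [integral_same, add_zero] at hparts
  rw [← hparts]
  refine integral_congr_ae ?_
  filter_upwards [hf.ae_hasDerivAt_integral, hg.ae_hasDerivAt_integral] with x hfx hgx hx
  have hx' : x ∈ uIcc a b := uIoc_subset_uIcc hx
  rw [((hfx hx' a left_mem_uIcc).const_add (F a)).deriv,
    ((hgx hx' a left_mem_uIcc).const_add (G a)).deriv, ← hF x hx', ← hG x hx']

theorem ofReal_intervalIntegral_le_setLIntegral_Icc {f : ℝ → ℝ} {a b : ℝ} (hab : a ≤ b)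
    (hf : IntervalIntegrable f volume a b) :
    ENNReal.ofReal (∫ x in a..b, f x) ≤ ∫⁻ x in Icc a b, ENNReal.ofReal (f x) := by
  rw [integral_of_le hab, setLIntegral_congr Ioc_ae_eq_Icc.symm,
    integral_eq_lintegral_pos_part_sub_lintegral_neg_part hf.1]
  exact ENNReal.ofReal_le_of_le_toReal (sub_le_self _ ENNReal.toReal_nonneg)

theorem ofReal_neg_sq_mul_sub_mul_le_Lcost {x : ℝ} (hx : 0 ≤ x) (a y : ℝ) :
    ENNReal.ofReal (-(a ^ 2 * x) / 4 - a * y / 2) ≤ 1 / 4 * Lcost x y := by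
  rcases hx.lt_or_eq with hx | rfl
  · have hle : -(a ^ 2 * x) / 4 - a * y / 2 ≤ 1 / 4 * (y ^ 2 / x) := by
      rw [mul_div_assoc', le_div_iff₀ hx]
      nlinarith [sq_nonneg (y + a * x)]
    rw [Lcost, if_pos hx, ← ENNReal.ofReal_one, ← ENNReal.ofReal_ofNat 4,
      ← ENNReal.ofReal_div_of_pos (by norm_num), ← ENNReal.ofReal_mul (by norm_num)]
    exact ENNReal.ofReal_le_ofReal hle
  · rcases eq_or_ne y 0 with rfl | hy
    · simp [Lcost]
    · simp [Lcost, hy, ENNReal.mul_top]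

theorem sum_sum_ite_eq_zero_of_antisymm {ι : Type*} [Fintype ι] {E : ι → ι → Prop}
    [DecidableRel E] (hE : ∀ i j, E i j ↔ E j i) {f : ι → ι → ℝ}
    (hf : ∀ i j, E i j → f j i = -f i j) :
    ∑ i, ∑ j, (if E i j then f i j else 0) = 0 := by
  have hswap : ∑ i, ∑ j, (if E i j then f i j else 0)
      = ∑ i, ∑ j, (if E i j then f j i else 0) := by
    rw [Finset.sum_comm]
    exact Finset.sum_congr rfl fun i _ => Finset.sum_congr rfl fun j _ =>
      if_congr (hE j i) rfl rfl
  have hneg : ∑ i, ∑ j, (if E i j then f j i else 0)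
      = -∑ i, ∑ j, (if E i j then f i j else 0) := by
    simp only [← Finset.sum_neg_distrib]
    refine Finset.sum_congr rfl fun i _ => Finset.sum_congr rfl fun j _ => ?_
    split_ifs with h
    · exact hf i j h
    · exact neg_zero.symm
  linarith

/-- In this notation the continuity equation of `Feasible` reads
`ρ̇_i = -outflow E Sg (wd t) (ρ t) (m t) i`. -/
def outflow {N : ℕ} (E : Fin N → Fin N → Prop) [DecidableRel E] (Sg : Fin N → ℝ) (v : ℝ)
    (μ : Fin N → ℝ) (m : Fin N → Fin N → ℝ) (i : Fin N) : ℝ :=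
  ∑ j, if E i j then m i j + (Sg j - Sg i) * thetaA μ i j * v else 0

theorem sum_mul_sub_mul_outflow_eq {N : ℕ} {E : Fin N → Fin N → Prop} [DecidableRel E]
    (hE : ∀ i j, E i j ↔ E j i) {m : Fin N → Fin N → ℝ} (hm : ∀ i j, m i j = -m j i)
    (Sg : Fin N → ℝ) (wd : ℝ → ℝ) (S Sd : ℝ → Fin N → ℝ) (μ : Fin N → ℝ) (t : ℝ) :
    ∑ i, (Sd t i * μ i - S t i * outflow E Sg (wd t) μ m i)
      = hjbExpr E Sg wd S Sd μ t + ∑ i, ∑ j, (if E i j then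
          -((S t i - S t j) ^ 2 * thetaA μ i j) / 4 - (S t i - S t j) * m i j / 2 else 0) := by
  have hθ : ∀ i j, thetaA μ j i = thetaA μ i j := fun i j => by simp only [thetaA]; ring
  -- after cancelling `∑ Sd μ`, the difference of the two sides is this antisymmetric edge sum
  have hzero := sum_sum_ite_eq_zero_of_antisymm hE
    (f := fun i j => (S t i + S t j) * ((Sg i - Sg j) * thetaA μ i j * wd t - m i j) / 2)
    fun i j _ => by simp only [hθ i j, hm j i]; ring
  rw [Finset.sum_sub_distrib, hjbExpr, add_assoc, add_assoc, sub_eq_add_neg, add_right_inj]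
  refine eq_of_sub_eq_zero (Eq.trans ?_ hzero)
  simp only [outflow, Finset.mul_sum, Finset.sum_mul, ← Finset.sum_neg_distrib,
    ← Finset.sum_sub_distrib, ← Finset.sum_add_distrib]
  refine Finset.sum_congr rfl fun i _ => Finset.sum_congr rfl fun j _ => ?_
  split_ifs <;> ring

theorem ofReal_sum_mul_sub_mul_outflow_le {N : ℕ} {E : Fin N → Fin N → Prop} [DecidableRel E]
    (hE : ∀ i j, E i j ↔ E j i) {m : Fin N → Fin N → ℝ} (hm : ∀ i j, m i j = -m j i)
    {Sg : Fin N → ℝ} {wd : ℝ → ℝ} {S Sd : ℝ → Fin N → ℝ} {μ : Fin N → ℝ} {t : ℝ}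
    (hμ : ∀ i, 0 ≤ μ i) (hhjb : hjbExpr E Sg wd S Sd μ t ≤ 0) :
    ENNReal.ofReal (∑ i, (Sd t i * μ i - S t i * outflow E Sg (wd t) μ m i))
      ≤ 1 / 4 * ∑ i, ∑ j, (if E i j then Lcost (thetaA μ i j) (m i j) else 0) := by
  have hθ : ∀ i j, 0 ≤ thetaA μ i j := fun i j => by unfold thetaA; linarith [hμ i, hμ j]
  have hsub : ∀ s : Finset (Fin N), ∀ f : Fin N → ℝ,
      ENNReal.ofReal (∑ i ∈ s, f i) ≤ ∑ i ∈ s, ENNReal.ofReal (f i) := fun s f =>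
    Finset.le_sum_of_subadditive _ ENNReal.ofReal_zero.le (fun _ _ => ENNReal.ofReal_add_le) s f
  rw [sum_mul_sub_mul_outflow_eq hE hm, Finset.mul_sum]
  refine (ENNReal.ofReal_le_ofReal (add_le_of_nonpos_left hhjb)).trans <| (hsub _ _).trans <|
    Finset.sum_le_sum fun i _ => (hsub _ _).trans ?_
  rw [Finset.mul_sum]
  refine Finset.sum_le_sum fun j _ => ?_
  split_ifs
  · exact ofReal_neg_sq_mul_sub_mul_le_Lcost (hθ i j) _ _
  · simp

theorem weak_duality_i_general
    (N : ℕ) (E : Fin N → Fin N → Prop) [DecidableRel E]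
    (hEsymm : ∀ i j, E i j ↔ E j i)
    (Sg : Fin N → ℝ) (wd : ℝ → ℝ)
    (ρa ρb : Fin N → ℝ)
    (ρ : ℝ → Fin N → ℝ) (m : ℝ → Fin N → Fin N → ℝ)
    (hfeas : Feasible E Sg wd ρa ρb ρ m)
    (S Sd : ℝ → Fin N → ℝ) (hS : AbsCtsL2 S Sd)
    (hhjb : ∀ᵐ t ∂(volume.restrict (Set.Icc (0 : ℝ) 1)),
      hjbExpr E Sg wd S Sd (ρ t) t ≤ 0) :
    ENNReal.ofReal ((∑ i, S 1 i * ρb i) - ∑ i, S 0 i * ρa i) ≤ action E ρ m := by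
  obtain ⟨hρ_cont, hρ_prob, hρ0, hρ1, hm, -, hflux, hρ⟩ := hfeas
  obtain ⟨-, hSd, hS⟩ := hS
  rw [← uIcc_of_le zero_le_one] at hρ_cont hρ hS
  set D : ℝ → Fin N → ℝ := fun t i => Sd t i * ρ t i - S t i * outflow E Sg (wd t) (ρ t) (m t) i
  have hρ' (i : Fin N) : ∀ t ∈ uIcc (0 : ℝ) 1,
      ρ t i = ρ 0 i + ∫ s in (0 : ℝ)..t, -outflow E Sg (wd s) (ρ s) (m s) i := fun t ht => by
    rw [hρ i t ht, hρ0, intervalIntegral.integral_neg, sub_eq_add_neg]; rfl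
  have hD_integral (i : Fin N) : ∫ t in (0 : ℝ)..1, D t i = S 1 i * ρb i - S 0 i * ρa i := by
    rw [← hρ0, ← hρ1, ← integral_mul_add_mul_eq_of_eq_const_add_integral
      (g := fun s => -outflow E Sg (wd s) (ρ s) (m s) i) (hSd i) (hflux i).neg (hS i) (hρ' i)]
    simp only [D, mul_neg, sub_eq_add_neg]
  have hD_int (i : Fin N) : IntervalIntegrable (fun t => D t i) volume 0 1 :=
    ((hSd i).mul_continuousOn ((continuous_apply i).comp_continuousOn hρ_cont)).sub
      ((hflux i).continuousOn_mul (continuousOn_of_eq_const_add_integral (hSd i) (hS i)))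
  calc ENNReal.ofReal ((∑ i, S 1 i * ρb i) - ∑ i, S 0 i * ρa i)
      = ENNReal.ofReal (∫ t in (0 : ℝ)..1, ∑ i, D t i) := by
        rw [integral_finsetSum fun i _ => hD_int i, Finset.sum_congr rfl fun i _ => hD_integral i,
          Finset.sum_sub_distrib]
    _ ≤ ∫⁻ t in Icc 0 1, ENNReal.ofReal (∑ i, D t i) :=
        ofReal_intervalIntegral_le_setLIntegral_Icc zero_le_one
          (by simpa only [Finset.sum_fn] using IntervalIntegrable.sum _ fun i _ => hD_int i)
    _ ≤ action E ρ m := lintegral_mono_ae <| by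
        filter_upwards [hhjb, ae_restrict_mem measurableSet_Icc] with t ht_hjb ht
        exact ofReal_sum_mul_sub_mul_outflow_le hEsymm (hm t).1 (hρ_prob t ht).1 ht_hjb

/-- Weak duality, part (i): if `(ρ,m)` is feasible and `S` is an absolutely
continuous subsolution of the Hamilton–Jacobi inequality along `ρ`, then
`⟨S(1),ρ^b⟩ − ⟨S(0),ρ^a⟩ ≤ A(ρ,m)`. -/
theorem weak_duality_i
    (N : ℕ) (hN : 2 ≤ N) (E : Fin N → Fin N → Prop) [DecidableRel E]
    (hEsymm : ∀ i j, E i j ↔ E j i) (hEirr : ∀ i, ¬ E i i)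
    (hconn : ∀ i j : Fin N, Relation.ReflTransGen (fun a b => E a b) i j)
    (Sg : Fin N → ℝ) (w wd : ℝ → ℝ) (hw : IsPWL w wd)
    (ρa ρb : Fin N → ℝ) (hρa : ProbVec ρa) (hρb : ProbVec ρb)
    (ρ : ℝ → Fin N → ℝ) (m : ℝ → Fin N → Fin N → ℝ)
    (hfeas : Feasible E Sg wd ρa ρb ρ m)
    (S Sd : ℝ → Fin N → ℝ) (hS : AbsCtsL2 S Sd)
    (hhjb : ∀ᵐ t ∂(volume.restrict (Set.Icc (0 : ℝ) 1)),
      hjbExpr E Sg wd S Sd (ρ t) t ≤ 0) :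
    ENNReal.ofReal ((∑ i, S 1 i * ρb i) - ∑ i, S 0 i * ρa i) ≤ action E ρ m :=
  weak_duality_i_general N E hEsymm Sg wd ρa ρb ρ m hfeas S Sd hS hhjb

end
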